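/- arXiv:1012.1825 — 5 statements merged into one kernel-verified Lean document; each statement's English description precedes it below -/
import Mathlib

section
/- Let K be a field, Ω a set, and Ω₁ ⊆ Ω a nonempty subset whose complement Ω \ Ω₁ is finite. Suppose given, for each v ∈ Ω, an absolute value |·|_v on K and a positive integer N_v satisfying the product formula: for every x ∈ K \ {0}, the set {v ∈ Ω : |x|_v ≠ 1} is finite and ∏_{v ∈ Ω, |x|_v ≠ 1} |x|_v^{N_v} = 1. Let (x_n)_{n∈ℕ} be a sequence in K such that (a) |x_n|_v ≤ 1 for every v ∈ Ω₁ and every n, (b) for every v ∈ Ω₁, |x_n|_v → 0 as n → ∞, and (c) for every v ∈ Ω \ Ω₁ the sequence (|x_n|_v)_{n∈ℕ} is bounded above. Then x_n = 0 for all sufficiently large n. -/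
/-!
Fix `w₀ ∈ Ω₁`. For `xₙ ≠ 0` the product formula gives `1 = ∏_w |xₙ|_w^{N_w}`; bounding the factors
at `Ω₁ \ {w₀}` by `1` leaves `1 ≤ |xₙ|_{w₀}^{N_{w₀}} · ∏_{w ∉ Ω₁} |xₙ|_w^{N_w}`. The second factor
is bounded in `n` (finitely many bounded factors) and the first tends to `0`, so the right-hand
side is eventually `< 1`, which forces `xₙ = 0`.
-/

open Filter Topology

theorem finprod_le_mul_finprod_mem_compl {α M : Type*} [CommMonoidWithZero M] [PartialOrder M]
    [ZeroLEOneClass M] [PosMulMono M] {f : α → M} (hf₀ : ∀ a, 0 ≤ f a)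
    (hf : f.HasFiniteMulSupport) {s : Set α} (hs : ∀ a ∈ s, f a ≤ 1) {a₀ : α} (ha₀ : a₀ ∈ s) :
    ∏ᶠ a, f a ≤ f a₀ * ∏ᶠ a ∈ sᶜ, f a := by
  have hle : f ≤ (insert a₀ sᶜ).mulIndicator f := by
    intro a
    by_cases ha : a ∈ insert a₀ sᶜ
    · rw [Set.mulIndicator_of_mem ha]
    · rw [Set.mulIndicator_of_notMem ha]
      exact hs a (by simp_all)
  calc ∏ᶠ a, f a ≤ ∏ᶠ a, (insert a₀ sᶜ).mulIndicator f a :=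
        finprod_le_finprod hf hf₀
          (hf.subset (by rw [Set.mulSupport_mulIndicator]; exact Set.inter_subset_right)) hle
    _ = f a₀ * ∏ᶠ a ∈ sᶜ, f a := by
      rw [← finprod_mem_def, finprod_mem_insert' f (by simpa using ha₀)
        (hf.subset Set.inter_subset_right)]

theorem exists_forall_finprod_mem_le {α ι M : Type*} [CommMonoidWithZero M] [PartialOrder M]
    [ZeroLEOneClass M] [PosMulMono M] {s : Set α} (hs : s.Finite) {g : α → ι → M}
    (hg₀ : ∀ a i, 0 ≤ g a i) (hg : ∀ a ∈ s, ∃ C, ∀ i, g a i ≤ C) :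
    ∃ C, ∀ i, ∏ᶠ a ∈ s, g a i ≤ C := by
  choose! C hC using hg
  refine ⟨∏ a ∈ hs.toFinset, C a, fun i => ?_⟩
  rw [finprod_mem_eq_finite_toFinset_prod _ hs]
  exact Finset.prod_le_prod (fun a _ => hg₀ a i) fun a ha => hC a (hs.mem_toFinset.mp ha) i

theorem AbsoluteValue.one_le_pow_mul_finprod_mem_compl {K Ω : Type*} [Semiring K]
    (v : Ω → AbsoluteValue K ℝ) (N : Ω → ℕ) {x : K} (hfin : {w | v w x ≠ 1}.Finite)
    (hprod : ∏ᶠ w, v w x ^ N w = 1) {s : Set Ω} (hs : ∀ w ∈ s, v w x ≤ 1) {w₀ : Ω}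
    (hw₀ : w₀ ∈ s) : 1 ≤ v w₀ x ^ N w₀ * ∏ᶠ w ∈ sᶜ, v w x ^ N w := by
  have hsupp : (Function.mulSupport fun w => v w x ^ N w) ⊆ {w | v w x ≠ 1} := by
    intro w hw h
    simp [h] at hw
  exact hprod ▸ finprod_le_mul_finprod_mem_compl (fun w => by positivity) (hfin.subset hsupp)
    (fun w hw => pow_le_one₀ (by positivity) (hs w hw)) hw₀

/-- Let `K` be a field, `Ω` a set (here: a type), `Ω₁ ⊆ Ω` nonempty with
finite complement.  Given absolute values `|·|_v` and positive integers `N_v` for `v ∈ Ω`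
satisfying the product formula, any sequence `(xₙ)` in `K` which is integral at all
`v ∈ Ω₁`, tends to `0` at every `v ∈ Ω₁`, and has bounded absolute values at the finitely
many `v ∉ Ω₁`, is eventually equal to `0`. -/
theorem stmt0 {K : Type*} [Field K] {Ω : Type*} (Ω₁ : Set Ω)
    (hΩ₁ne : Ω₁.Nonempty) (hΩ₁cof : Ω₁ᶜ.Finite)
    (v : Ω → AbsoluteValue K ℝ) (N : Ω → ℕ) (hNpos : ∀ w, 0 < N w)
    (hfin : ∀ x : K, x ≠ 0 → {w : Ω | v w x ≠ 1}.Finite)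
    (hprod : ∀ x : K, x ≠ 0 → ∏ᶠ w : Ω, (v w x) ^ (N w) = 1)
    (x : ℕ → K)
    (ha : ∀ w ∈ Ω₁, ∀ n : ℕ, v w (x n) ≤ 1)
    (hb : ∀ w ∈ Ω₁, Tendsto (fun n => v w (x n)) atTop (𝓝 0))
    (hc : ∀ w ∉ Ω₁, ∃ C : ℝ, ∀ n : ℕ, v w (x n) ≤ C) :
    ∃ N₀ : ℕ, ∀ n ≥ N₀, x n = 0 := by
  obtain ⟨w₀, hw₀⟩ := hΩ₁ne
  set P : ℕ → ℝ := fun n => ∏ᶠ w ∈ Ω₁ᶜ, v w (x n) ^ N w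
  obtain ⟨C, hC⟩ : ∃ C, ∀ n, P n ≤ C := by
    refine exists_forall_finprod_mem_le hΩ₁cof (fun _ _ => by positivity) fun w hw => ?_
    obtain ⟨C, hC⟩ := hc w hw
    exact ⟨C ^ N w, fun n => pow_le_pow_left₀ (by positivity) (hC n) _⟩
  have hP₀ : ∀ n, 0 ≤ P n := fun n => finprod_nonneg fun w => finprod_nonneg fun _ => by positivity
  have hlim : Tendsto (fun n => v w₀ (x n) ^ N w₀ * P n) atTop (𝓝 0) := by
    refine Tendsto.zero_mul_isBoundedUnder_le ?_
      (isBoundedUnder_of ⟨C, fun n => (Real.norm_of_nonneg (hP₀ n)).trans_le (hC n)⟩)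
    simpa [zero_pow (hNpos w₀).ne'] using (hb w₀ hw₀).pow (N w₀)
  refine eventually_atTop.mp ((hlim.eventually (gt_mem_nhds one_pos)).mono fun n hn => ?_)
  by_contra hxn
  exact hn.not_ge <| AbsoluteValue.one_le_pow_mul_finprod_mem_compl v N (hfin _ hxn)
    (hprod _ hxn) (fun w hw => ha w hw n) hw₀
end

section
/- Let p be a prime, K a field of characteristic p, t ∈ K, and φ(X) = tX + c_1X^p + ⋯ + c_DX^{p^D} ∈ K[X] with D ≥ 1 and c_D ≠ 0 (a Drinfeld module of generic characteristic). Let |·|_v be a nonarchimedean absolute value on K such that (i) |P(t)|_v = 1 for every nonzero polynomial P ∈ 𝔽_p[X] (so every nonzero element of 𝔽_p[t] ⊆ K is a v-adic unit), and (ii) |c_i|_v ≤ 1 for all 1 ≤ i ≤ D. Let Γ ⊆ K be the Φ(R)-submodule generated by finitely many elements x_1, …, x_r ∈ K with |x_j|_v ≤ 1 for each j. Then Γ is discrete with respect to |·|_v: there exists ε > 0 such that every γ ∈ Γ with |γ|_v < ε equals 0. -/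
/-- The `𝔽_p`-linear map `T_φ : K → K` induced by the additive polynomial
`φ(X) = tX + c₁X^p + ⋯ + c_D X^{p^D}` of a Drinfeld module of generic characteristic. -/
noncomputable def genericTphi {K : Type*} [Field K] (p D : ℕ) (t : K) (c : ℕ → K) :
    K → K :=
  fun x => t * x + ∑ i ∈ Finset.Icc 1 D, c i * x ^ (p ^ i)

/-! For `v x ≤ 1` the map `T_φ` agrees with multiplication by `t` up to an error of size
`v x ^ p`, hence so does `Φ_a` with multiplication by `a(t)`. As `a(t)` is a unit for `a ≠ 0`,
`Φ(R)` acts isometrically on the open unit ball `{v < 1}`. The part of `Γ` inside that ball is a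
finitely generated `𝔽_p[t]`-module because `𝔽_p[t]` is Noetherian, and an isometric action makes
a finitely generated module discrete, by induction on the number of generators: eliminating the
last generator between two nonzero elements `m₁, m₂` of different sizes leaves a smaller element,
so `a₂ • m₁ = a₁ • m₂`, which isometry forbids. -/

open Polynomial Submodule

section Discrete

variable {A M : Type*} [CommRing A] [AddCommGroup M] [Module A M] {f : M → ℝ}

theorem exists_pos_forall_mem_span_lt_imp_eq_zero
    (hna : IsNonarchimedean f) (hf_neg : ∀ x, f (-x) = f x) (hf_zero : f 0 = 0)
    (hf_pos : ∀ x, x ≠ 0 → 0 < f x) {N : Submodule A M}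
    (hsmul : ∀ a : A, a ≠ 0 → ∀ m ∈ N, f (a • m) = f m) (s : Finset M)
    (hsN : span A (s : Set M) ≤ N) :
    ∃ ε > 0, ∀ m ∈ span A (s : Set M), f m < ε → m = 0 := by
  classical
  have hf_sub : ∀ x y, f (x - y) ≤ max (f x) (f y) := fun x y => by
    simpa only [sub_eq_add_neg, hf_neg] using hna x (-y)
  have hf_nonneg : ∀ m, 0 ≤ f m := fun m => by
    rcases eq_or_ne m 0 with rfl | hm
    exacts [hf_zero.ge, (hf_pos m hm).le]
  have hsmul_le : ∀ (a : A), ∀ m ∈ N, f (a • m) ≤ f m := fun a m hm => by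
    rcases eq_or_ne a 0 with rfl | ha
    exacts [by simpa [hf_zero] using hf_nonneg m, (hsmul a ha m hm).le]
  induction s using Finset.induction_on with
  | empty => exact ⟨1, one_pos, fun m hm _ => by simpa using hm⟩
  | insert y s _ ih =>
    rw [Finset.coe_insert] at hsN ⊢
    obtain ⟨ε, hε, hs⟩ := ih ((span_mono (Set.subset_insert y _)).trans hsN)
    by_contra! hfar
    obtain ⟨m₁, hm₁, hm₁ε, hm₁0⟩ := hfar ε hε
    obtain ⟨m₂, hm₂, hm₂m₁, hm₂0⟩ := hfar (f m₁) (hf_pos m₁ hm₁0)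
    have hm₁N := hsN hm₁
    have hm₂N := hsN hm₂
    obtain ⟨a₁, x₁, hx₁, rfl⟩ := mem_span_insert.mp hm₁
    obtain ⟨a₂, x₂, hx₂, rfl⟩ := mem_span_insert.mp hm₂
    -- eliminating `y` between `m₁` and `m₂` leaves a small element of `span A s`
    have hcross : a₂ • (a₁ • y + x₁) = a₁ • (a₂ • y + x₂) := by
      rw [← sub_eq_zero]
      refine hs _ ?_ ?_
      · convert sub_mem (smul_mem _ a₂ hx₁) (smul_mem _ a₁ hx₂) using 1
        simp only [smul_add, smul_smul, mul_comm a₂ a₁]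
        abel
      · refine (hf_sub _ _).trans_lt (max_lt ?_ ?_)
        · exact (hsmul_le a₂ _ hm₁N).trans_lt hm₁ε
        · exact (hsmul_le a₁ _ hm₂N).trans_lt (hm₂m₁.trans hm₁ε)
    rcases eq_or_ne a₁ 0 with rfl | ha₁
    · rw [zero_smul, zero_add] at hm₁0 hm₁ε
      exact hm₁0 (hs x₁ hx₁ hm₁ε)
    have ha₂ : a₂ ≠ 0 := by
      rintro rfl
      have := hsmul a₁ ha₁ _ hm₂N
      rw [← hcross, zero_smul, hf_zero] at this
      exact (hf_pos _ hm₂0).ne this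
    have := hsmul a₂ ha₂ _ hm₁N
    rw [hcross, hsmul a₁ ha₁ _ hm₂N] at this
    exact hm₂m₁.ne this

theorem Submodule.FG.exists_pos_forall_mem_lt_imp_eq_zero [IsNoetherianRing A]
    (hna : IsNonarchimedean f) (hf_neg : ∀ x, f (-x) = f x) (hf_zero : f 0 = 0)
    (hf_pos : ∀ x, x ≠ 0 → 0 < f x) (hsmul : ∀ a : A, a ≠ 0 → ∀ m, f m < 1 → f (a • m) = f m)
    {N : Submodule A M} (hN : N.FG) : ∃ ε > 0, ∀ m ∈ N, f m < ε → m = 0 := by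
  let ball : Submodule A M :=
    { carrier := {m | f m < 1}
      add_mem' := fun {x y} hx hy => (hna x y).trans_lt (max_lt hx hy)
      zero_mem' := by simp [hf_zero]
      smul_mem' := fun a m hm => by
        rcases eq_or_ne a 0 with rfl | ha
        · simp [hf_zero]
        · exact (hsmul a ha m hm).trans_lt hm }
  obtain ⟨s, hs⟩ := hN.of_le (inf_le_left : N ⊓ ball ≤ N)
  obtain ⟨ε, hε, hsmall⟩ := exists_pos_forall_mem_span_lt_imp_eq_zero hna hf_neg hf_zero hf_pos
    (fun a ha m hm => hsmul a ha m (mem_inf.mp hm).2) s hs.le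
  refine ⟨min ε 1, lt_min hε one_pos, fun m hm hmε => hsmall m ?_ (hmε.trans_le (min_le_left _ _))⟩
  exact hs ▸ ⟨hm, hmε.trans_le (min_le_right _ _)⟩

end Discrete

section Closeness

variable {K A : Type*} [Field K] [CommRing A] [Algebra A K] {v : AbsoluteValue K ℝ}
  {T : Module.End A K} {t : K} {n : ℕ}

theorem abv_aeval_apply_sub_mul_le (hna : IsNonarchimedean v) (hn : n ≠ 0)
    (ht : ∀ a : A[X], v (aeval t a) ≤ 1) (hT : ∀ x, v x ≤ 1 → v (T x - t * x) ≤ v x ^ n)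
    (a : A[X]) {x : K} (hx : v x ≤ 1) : v (aeval T a x - aeval t a * x) ≤ v x ^ n := by
  have hxn : v x ^ n ≤ v x := pow_le_of_le_one (v.nonneg x) hx hn
  induction a using Polynomial.induction_on with
  | C c => simp [Algebra.smul_def]
  | add a b iha ihb =>
    calc _ = v ((aeval T a x - aeval t a * x) + (aeval T b x - aeval t b * x)) := by
          simp only [map_add, LinearMap.add_apply]; ring_nf
      _ ≤ _ := (hna _ _).trans (max_le iha ihb)
  | monomial k c ih =>
    rw [pow_succ', mul_left_comm, map_mul (aeval T) X, map_mul (aeval t) X, aeval_X, aeval_X,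
      Module.End.mul_apply]
    set y := aeval T (C c * X ^ k) x
    set w := aeval t (C c * X ^ k)
    have hvt : v t ≤ 1 := by simpa using ht X
    have hy : v y ≤ v x := calc
      v y = v (w * x + (y - w * x)) := by ring_nf
      _ ≤ max (v w * v x) (v x ^ n) := (hna _ _).trans (by rw [map_mul]; exact max_le_max le_rfl ih)
      _ ≤ v x := max_le (mul_le_of_le_one_left (v.nonneg x) (ht _)) hxn
    calc v (T y - t * w * x) = v ((T y - t * y) + t * (y - w * x)) := by ring_nf
      _ ≤ max (v y ^ n) (v t * v x ^ n) := (hna _ _).trans <| by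
          rw [map_mul]
          exact max_le_max (hT y (hy.trans hx)) (mul_le_mul_of_nonneg_left ih (v.nonneg t))
      _ ≤ v x ^ n := max_le (pow_le_pow_left₀ (v.nonneg y) hy n)
          (mul_le_of_le_one_left (by positivity) hvt)

theorem abv_aeval_apply_eq (hna : IsNonarchimedean v) (hn : 1 < n)
    (ht : ∀ a : A[X], v (aeval t a) ≤ 1) (hT : ∀ x, v x ≤ 1 → v (T x - t * x) ≤ v x ^ n)
    {a : A[X]} (ha : v (aeval t a) = 1) {x : K} (hx : v x < 1) : v (aeval T a x) = v x := by
  rcases eq_or_ne x 0 with rfl | hx0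
  · simp
  have hmul : v (aeval t a * x) = v x := by rw [map_mul, ha, one_mul]
  have hdiff : v (aeval T a x - aeval t a * x) < v (aeval t a * x) := hmul ▸
    (abv_aeval_apply_sub_mul_le hna (by omega) ht hT a hx.le).trans_lt
      (pow_lt_self_of_lt_one₀ (v.pos hx0) hx hn)
  rw [← hmul, ← IsNonarchimedean.add_eq_left_of_lt hna hdiff, add_sub_cancel]

end Closeness

theorem exists_pos_forall_lt_imp_eq_zero_of_mem_span {K A : Type*} [Field K] [CommRing A]
    [IsNoetherianRing A] [Algebra A K] {v : AbsoluteValue K ℝ} {T : Module.End A K} {t : K}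
    {n : ℕ} (hna : IsNonarchimedean v) (hn : 1 < n)
    (hunit : ∀ a : A[X], a ≠ 0 → v (aeval t a) = 1)
    (hT : ∀ x, v x ≤ 1 → v (T x - t * x) ≤ v x ^ n) {s : Set K} (hs : s.Finite) :
    ∃ ε > 0, ∀ x, Module.AEval'.of T x ∈ span A[X] (Module.AEval'.of T '' s) → v x < ε →
      x = 0 := by
  set ι := Module.AEval'.of T
  have ht : ∀ a : A[X], v (aeval t a) ≤ 1 := fun a => by
    rcases eq_or_ne a 0 with rfl | ha
    exacts [by simp, (hunit a ha).le]
  obtain ⟨ε, hε, hsmall⟩ := (fg_span (hs.image ι)).exists_pos_forall_mem_lt_imp_eq_zero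
    (f := fun m => v (ι.symm m)) (fun x y => by simpa using hna _ _) (fun x => by simp)
    (by simp) (fun m hm => v.pos (by simpa using hm))
    (fun a ha m hm => by
      rw [Module.AEval.of_symm_smul]
      exact abv_aeval_apply_eq hna hn ht hT (hunit a ha) hm)
  exact ⟨ε, hε, fun x hx hxε => by simpa using hsmall (ι x) hx (by simpa using hxε)⟩

noncomputable def genericTphiAddHom {K : Type*} [Field K] (p : ℕ) [Fact p.Prime] [CharP K p]
    (D : ℕ) (t : K) (c : ℕ → K) : K →+ K :=
  AddMonoidHom.mk' (genericTphi p D t c) fun x y => by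
    simp only [genericTphi, add_pow_char_pow, mul_add, Finset.sum_add_distrib]
    ring

theorem genericTphi_sub_mul_le {K : Type*} [Field K] {v : AbsoluteValue K ℝ}
    (hna : IsNonarchimedean v) {p D : ℕ} {t : K} {c : ℕ → K}
    (hint : ∀ i, 1 ≤ i → i ≤ D → v (c i) ≤ 1) {x : K} (hx : v x ≤ 1) :
    v (genericTphi p D t c x - t * x) ≤ v x ^ p := by
  rw [genericTphi, add_sub_cancel_left]
  refine Finset.sum_induction _ (fun y => v y ≤ v x ^ p) (fun a b ha hb => (hna a b).trans
    (max_le ha hb)) (by simp only [map_zero]; positivity) fun i hi => ?_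
  obtain ⟨hi1, hiD⟩ := Finset.mem_Icc.mp hi
  rw [map_mul, map_pow]
  exact (mul_le_of_le_one_left (by positivity) (hint i hi1 hiD)).trans
    (pow_le_pow_of_le_one (v.nonneg x) hx (Nat.le_self_pow (by omega) p))

theorem stmt1_general {K : Type*} [Field K] (p : ℕ) [Fact p.Prime] [CharP K p]
    (t : K) (D : ℕ) (c : ℕ → K)
    (v : AbsoluteValue K ℝ) (hna : IsNonarchimedean (v : K → ℝ))
    (hunit : ∀ P : Polynomial (ZMod p), P ≠ 0 →
      v (Polynomial.eval₂ (ZMod.castHom (dvd_refl p) K) t P) = 1)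
    (hint : ∀ i, 1 ≤ i → i ≤ D → v (c i) ≤ 1)
    (r : ℕ) (xs : Fin r → K)
    (Γ : AddSubgroup K)
    -- `Γ` is the smallest such submodule, i.e. it is generated by `x₁, …, x_r`:
    (hmin : ∀ Γ' : AddSubgroup K, (∀ y ∈ Γ', genericTphi p D t c y ∈ Γ') →
      (∀ j, xs j ∈ Γ') → Γ ≤ Γ') :
    ∃ ε : ℝ, 0 < ε ∧ ∀ γ ∈ Γ, v γ < ε → γ = 0 := by
  -- `Φ_a` is `aeval T a`, so `Φ(R)`-submodules of `K` are `(ZMod p)[X]`-submodules of `AEval' T`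
  let _ : Algebra (ZMod p) K := ZMod.algebra K p
  set T : Module.End (ZMod p) K := (genericTphiAddHom p D t c).toZModLinearMap p
  set ι := Module.AEval'.of T
  obtain ⟨ε, hε, hsmall⟩ := exists_pos_forall_lt_imp_eq_zero_of_mem_span (T := T) hna
    (Fact.out : p.Prime).one_lt hunit (fun x hx => genericTphi_sub_mul_le hna hint hx)
    (Set.finite_range xs)
  set N := span (ZMod p)[X] (ι '' Set.range xs)
  refine ⟨ε, hε, fun γ hγ => hsmall γ (hmin (N.toAddSubgroup.comap ι.toAddMonoidHom) ?_ ?_ hγ)⟩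
  · intro y hy
    change ι (T y) ∈ N
    rw [← Module.AEval'.X_smul_of]
    exact N.smul_mem X (hy : ι y ∈ N)
  · exact fun j => (subset_span ⟨xs j, Set.mem_range_self j, rfl⟩ : ι (xs j) ∈ N)

/-- For a Drinfeld module of generic characteristic defined over a field `K`
of characteristic `p`, and a nonarchimedean absolute value `v` on `K` at which every nonzero
element of `𝔽_p[t]` is a unit and all coefficients of `φ` are integral, every finitely
generated `Φ(R)`-submodule `Γ ⊆ K` generated by `v`-integral elements is `v`-adically
discrete. -/
theorem stmt1 {K : Type*} [Field K] (p : ℕ) [Fact p.Prime] [CharP K p]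
    (t : K) (D : ℕ) (hD : 1 ≤ D) (c : ℕ → K) (hcD : c D ≠ 0)
    (v : AbsoluteValue K ℝ) (hna : IsNonarchimedean (v : K → ℝ))
    (hunit : ∀ P : Polynomial (ZMod p), P ≠ 0 →
      v (Polynomial.eval₂ (ZMod.castHom (dvd_refl p) K) t P) = 1)
    (hint : ∀ i, 1 ≤ i → i ≤ D → v (c i) ≤ 1)
    (r : ℕ) (xs : Fin r → K) (hxs : ∀ j, v (xs j) ≤ 1)
    (Γ : AddSubgroup K)
    -- `Γ` is a `Φ(R)`-submodule:
    (hΓmod : ∀ y ∈ Γ, genericTphi p D t c y ∈ Γ)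
    -- `Γ` contains the generators:
    (hgen : ∀ j, xs j ∈ Γ)
    -- `Γ` is the smallest such submodule, i.e. it is generated by `x₁, …, x_r`:
    (hmin : ∀ Γ' : AddSubgroup K, (∀ y ∈ Γ', genericTphi p D t c y ∈ Γ') →
      (∀ j, xs j ∈ Γ') → Γ ≤ Γ') :
    ∃ ε : ℝ, 0 < ε ∧ ∀ γ ∈ Γ, v γ < ε → γ = 0 :=
  stmt1_general p t D c v hna hunit hint r xs Γ hmin
end

section
/- Let p be a prime, K a field of characteristic p, t ∈ K, and φ(X) = tX + c_1X^p + ⋯ + c_DX^{p^D} ∈ K[X] with D ≥ 1 and c_D ≠ 0. Let |·|_v be a nonarchimedean absolute value on K such that |P(t)|_v = 1 for every nonzero P ∈ 𝔽_p[X] and |c_i|_v ≤ 1 for all i. Let g ≥ 1 and let Γ ⊆ K^g be the Φ(R)-submodule (under the coordinatewise action) generated by finitely many points all of whose coordinates x satisfy |x|_v ≤ 1. Then the image of Γ under the diagonal embedding K^g → K_v^g is a discrete and closed subgroup of K_v^g; in particular, the topological closure of Γ in K_v^g equals Γ. -/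
/-- The canonical embedding of `K` into the completion `K_v` of `K` with respect to an
absolute value `v`. -/
noncomputable def embCompletion {K : Type*} [Field K] (v : AbsoluteValue K ℝ) :
    K → v.Completion :=
  fun x => (((WithAbs.equiv v).symm x : WithAbs v) : v.Completion)

/-!
Give `K^g` the sup norm coming from `v`, and let `ℤ[X]` act on it with `X` acting as `T_φ`
coordinatewise. As `ℤ[X]` is noetherian, the submodule `W` generated by the `xs j` is a
noetherian module, and it contains `Γ`. Since `|c_i| ≤ 1`, on the unit ball `T_φ z ≡ t z` modulo
`‖z‖^p`, so `b ∈ ℤ[X]` acts on a vector of norm `< 1` by zero if `p ∣ b` and otherwise, as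
`|b(t)| = 1`, isometrically. Take a maximal span of finitely many vectors of `W` of norm `< 1`
with pairwise distinct norms: a nonzero vector of `W` smaller than all of them lies in that span,
but in an ultrametric space a combination of vectors with distinct norms has the norm of one of
them. So the norm is bounded below on `W \ {0}`, and the image of `Γ` is uniformly discrete,
hence closed and discrete.
-/

open Polynomial

theorem aeval_eq_zero_of_map_eq_zero {R M : Type*} [Ring R] (p : ℕ) [CharP R p]
    [AddCommGroup M] [Module R M] (f : Module.End ℤ M) {b : ℤ[X]}
    (hb : b.map (Int.castRingHom (ZMod p)) = 0) : aeval f b = 0 := by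
  obtain ⟨b, rfl⟩ : C (p : ℤ) ∣ b := (C_dvd_iff_dvd_coeff _ _).2 fun i =>
    (ZMod.intCast_zmod_eq_zero_iff_dvd _ _).1 (by simpa using congr(coeff $hb i))
  ext z
  simp [← Nat.cast_smul_eq_nsmul R]

theorem aeval_eq_eval₂_map_zmod {K : Type*} [Field K] (p : ℕ) [CharP K p] (t : K) (b : ℤ[X]) :
    aeval t b = (b.map (Int.castRingHom (ZMod p))).eval₂ (ZMod.castHom (dvd_refl p) K) t := by
  rw [eval₂_map, aeval_def]
  congr
  exact RingHom.ext_int _ _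

section NoetherianGap

variable {A E : Type*} [Ring A] [NormedAddCommGroup E] [IsUltrametricDist E] [Module A E]

theorem exists_norm_eq_of_mem_span
    (hsmul : ∀ (a : A) (x : E), ‖x‖ < 1 → a • x = 0 ∨ ‖a • x‖ = ‖x‖)
    {F : Finset E} (hF : ∀ y ∈ F, ‖y‖ < 1) (hinj : Set.InjOn norm (F : Set E))
    {x : E} (hx : x ∈ Submodule.span A (F : Set E)) (hx0 : x ≠ 0) :
    ∃ y ∈ F, ‖x‖ = ‖y‖ := by
  classical
  obtain ⟨f, -, rfl⟩ := Submodule.mem_span_finset.1 hx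
  set F' := F.filter fun y => f y • y ≠ 0
  have hnorm : ∀ y ∈ F', ‖f y • y‖ = ‖y‖ := fun y hy =>
    (hsmul _ _ (hF y (Finset.mem_filter.1 hy).1)).resolve_left (Finset.mem_filter.1 hy).2
  have hsum : ∑ y ∈ F, f y • y = ∑ y ∈ F', f y • y := (Finset.sum_filter_ne_zero _).symm
  have hne : F'.Nonempty := by
    rw [Finset.nonempty_iff_ne_empty]
    rintro h
    exact hx0 (by rw [hsum, h, Finset.sum_empty])
  have hpair : Set.Pairwise (F' : Set E) fun y z => ‖f y • y‖ ≠ ‖f z • z‖ := by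
    intro y hy z hz hyz
    rw [hnorm y hy, hnorm z hz]
    exact fun h => hyz (hinj (Finset.mem_filter.1 hy).1 (Finset.mem_filter.1 hz).1 h)
  obtain ⟨y, hy, hmax⟩ := F'.exists_mem_eq_sup' hne fun y => ‖f y • y‖
  refine ⟨y, (Finset.mem_filter.1 hy).1, ?_⟩
  rw [hsum, IsUltrametricDist.norm_sum_eq_sup'_of_pairwise_ne hne hpair, hmax, hnorm y hy]

theorem exists_pos_le_norm_of_isNoetherian [IsNoetherian A E]
    (hsmul : ∀ (a : A) (x : E), ‖x‖ < 1 → a • x = 0 ∨ ‖a • x‖ = ‖x‖) :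
    ∃ ε > 0, ∀ x : E, x ≠ 0 → ε ≤ ‖x‖ := by
  classical
  let admissible : Set (Finset E) :=
    {F | (∀ y ∈ F, y ≠ 0 ∧ ‖y‖ < 1) ∧ Set.InjOn norm (F : Set E)}
  obtain ⟨_, ⟨F, hF, rfl⟩, hmax⟩ := set_has_maximal_iff_noetherian.2 ‹_›
    ((fun F : Finset E => Submodule.span A (F : Set E)) '' admissible)
    ⟨_, ∅, by simp [admissible], rfl⟩
  set ε := (insert 1 (F.image norm)).min' (Finset.insert_nonempty _ _)
  have hεF : ∀ y ∈ F, ε ≤ ‖y‖ := fun y hy =>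
    Finset.min'_le _ _ (Finset.mem_insert_of_mem (Finset.mem_image_of_mem _ hy))
  have hε : 0 < ε := by
    simpa [ε, Finset.lt_min'_iff] using fun y hy => norm_pos_iff.2 (hF.1 y hy).1
  refine ⟨ε, hε, fun x hx0 => le_of_not_gt fun hxε => ?_⟩
  have hx1 : ‖x‖ < 1 := hxε.trans_le (Finset.min'_le _ _ (Finset.mem_insert_self _ _))
  have hxF : insert x F ∈ admissible := by
    refine ⟨by simpa [hx0, hx1] using hF.1, ?_⟩
    rw [Finset.coe_insert, Set.injOn_insert]
    · exact ⟨hF.2, fun ⟨y, hy, hxy⟩ => (hεF y hy).not_gt (hxy ▸ hxε)⟩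
    · exact fun hx => (hεF x hx).not_gt hxε
  have hxspan : x ∈ Submodule.span A (F : Set E) := by
    by_contra hnot
    refine hmax _ ⟨_, hxF, rfl⟩ (lt_of_le_of_ne (Submodule.span_mono (by simp)) fun h => hnot ?_)
    exact (SetLike.ext_iff.1 h x).2 (Submodule.subset_span (by simp))
  obtain ⟨y, hy, hxy⟩ :=
    exists_norm_eq_of_mem_span hsmul (fun y hy => (hF.1 y hy).2) hF.2 hxspan hx0
  exact (hεF y hy).not_gt (hxy ▸ hxε)

end NoetherianGap

section Perturbation

variable {𝕜 E : Type*} [NormedField 𝕜] [NormedAddCommGroup E] [IsUltrametricDist E]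
  [NormedSpace 𝕜 E] {T : Module.End ℤ E} {t : 𝕜} {q : ℕ}

theorem norm_apply_le_of_norm_sub_smul_le (ht : ‖t‖ ≤ 1) (hq : q ≠ 0)
    (hT : ∀ z : E, ‖z‖ ≤ 1 → ‖T z - t • z‖ ≤ ‖z‖ ^ q) {z : E} (hz : ‖z‖ ≤ 1) :
    ‖T z‖ ≤ ‖z‖ :=
  calc ‖T z‖ = ‖(T z - t • z) + t • z‖ := by rw [sub_add_cancel]
    _ ≤ max ‖T z - t • z‖ ‖t • z‖ := IsUltrametricDist.norm_add_le_max _ _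
    _ ≤ ‖z‖ := max_le ((hT z hz).trans (pow_le_of_le_one (norm_nonneg _) hz hq))
        (by rw [norm_smul]; exact mul_le_of_le_one_left (norm_nonneg _) ht)

theorem norm_pow_apply_le_of_norm_sub_smul_le (ht : ‖t‖ ≤ 1) (hq : q ≠ 0)
    (hT : ∀ z : E, ‖z‖ ≤ 1 → ‖T z - t • z‖ ≤ ‖z‖ ^ q) {z : E} (hz : ‖z‖ ≤ 1) (n : ℕ) :
    ‖(T ^ n) z‖ ≤ ‖z‖ := by
  induction n with
  | zero => simp
  | succ n ih =>
    rw [pow_succ', Module.End.mul_apply]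
    exact (norm_apply_le_of_norm_sub_smul_le ht hq hT (ih.trans hz)).trans ih

theorem norm_pow_apply_sub_le (ht : ‖t‖ ≤ 1) (hq : q ≠ 0)
    (hT : ∀ z : E, ‖z‖ ≤ 1 → ‖T z - t • z‖ ≤ ‖z‖ ^ q) {z : E} (hz : ‖z‖ ≤ 1) (n : ℕ) :
    ‖(T ^ n) z - t ^ n • z‖ ≤ ‖z‖ ^ q := by
  induction n with
  | zero => simp
  | succ n ih =>
    set w := (T ^ n) z
    have hw : ‖w‖ ≤ ‖z‖ := norm_pow_apply_le_of_norm_sub_smul_le ht hq hT hz n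
    have hsplit : (T ^ (n + 1)) z - t ^ (n + 1) • z = (T w - t • w) + t • (w - t ^ n • z) := by
      rw [pow_succ', Module.End.mul_apply, pow_succ', mul_smul, smul_sub]
      abel
    rw [hsplit]
    refine (IsUltrametricDist.norm_add_le_max _ _).trans (max_le ?_ ?_)
    · exact (hT w (hw.trans hz)).trans (pow_le_pow_left₀ (norm_nonneg _) hw q)
    · rw [norm_smul]
      exact (mul_le_of_le_one_left (norm_nonneg _) ht).trans ih

theorem norm_aeval_apply_sub_le (ht : ‖t‖ ≤ 1) (hq : q ≠ 0)
    (hT : ∀ z : E, ‖z‖ ≤ 1 → ‖T z - t • z‖ ≤ ‖z‖ ^ q) {z : E} (hz : ‖z‖ ≤ 1) (b : ℤ[X]) :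
    ‖aeval T b z - aeval t b • z‖ ≤ ‖z‖ ^ q := by
  induction b using Polynomial.induction_on' with
  | add b₁ b₂ h₁ h₂ =>
    rw [map_add, map_add, LinearMap.add_apply, add_smul, add_sub_add_comm]
    exact (IsUltrametricDist.norm_add_le_max _ _).trans (max_le h₁ h₂)
  | monomial n a =>
    have : aeval T (monomial n a) z - aeval t (monomial n a) • z =
        a • ((T ^ n) z - t ^ n • z) := by
      rw [aeval_monomial, aeval_monomial, Module.End.mul_apply, Module.algebraMap_end_apply,
        algebraMap_int_eq, eq_intCast, mul_smul, Int.cast_smul_eq_zsmul, smul_sub]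
    rw [this]
    exact (IsUltrametricDist.norm_zsmul_le _ _).trans (norm_pow_apply_sub_le ht hq hT hz n)

theorem norm_aeval_apply_eq (ht : ‖t‖ ≤ 1) (hq : 1 < q)
    (hT : ∀ z : E, ‖z‖ ≤ 1 → ‖T z - t • z‖ ≤ ‖z‖ ^ q) {b : ℤ[X]} (hb : ‖aeval t b‖ = 1)
    {z : E} (hz : ‖z‖ < 1) : ‖aeval T b z‖ = ‖z‖ := by
  rcases eq_or_ne z 0 with rfl | hz0
  · simp
  have hlead : ‖aeval t b • z‖ = ‖z‖ := by rw [norm_smul, hb, one_mul]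
  have hsmall : ‖aeval T b z - aeval t b • z‖ < ‖aeval t b • z‖ := by
    rw [hlead]
    exact (norm_aeval_apply_sub_le ht (by omega) hT hz.le b).trans_lt
      (pow_lt_self_of_lt_one₀ (norm_pos_iff.2 hz0) hz hq)
  rw [← sub_add_cancel (aeval T b z) (aeval t b • z),
    IsUltrametricDist.norm_add_eq_max_of_norm_ne_norm hsmall.ne, max_eq_right hsmall.le, hlead]

end Perturbation

section GenericTphi

variable {K : Type*} [Field K] (p D : ℕ) (t : K) (c : ℕ → K)

theorem genericTphi_add [Fact p.Prime] [CharP K p] (x y : K) :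
    genericTphi p D t c (x + y) = genericTphi p D t c x + genericTphi p D t c y := by
  simp only [genericTphi, add_pow_char_pow, mul_add, Finset.sum_add_distrib]
  ring

theorem map_genericTphi {L : Type*} [Field L] (f : K →+* L) (x : K) :
    f (genericTphi p D t c x) = genericTphi p D (f t) (f ∘ c) (f x) := by
  simp [genericTphi, map_sum]

noncomputable def genericTphiHom [Fact p.Prime] [CharP K p] : K →+ K :=
  AddMonoidHom.mk' (genericTphi p D t c) (genericTphi_add p D t c)

noncomputable def genericTphiPi (ι : Type*) [Fact p.Prime] [CharP K p] :
    Module.End ℤ (ι → K) :=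
  ((genericTphiHom p D t c).compLeft ι).toIntLinearMap

@[simp]
theorem genericTphiPi_apply {ι : Type*} [Fact p.Prime] [CharP K p] (z : ι → K) (i : ι) :
    genericTphiPi p D t c ι z i = genericTphi p D t c (z i) := rfl

end GenericTphi

section Norm

variable {𝕂 : Type*} [NormedField 𝕂] [IsUltrametricDist 𝕂] {p D : ℕ} {t : 𝕂} {c : ℕ → 𝕂}

theorem norm_genericTphi_sub_mul_le (hc : ∀ i, 1 ≤ i → i ≤ D → ‖c i‖ ≤ 1) {x : 𝕂}
    (hx : ‖x‖ ≤ 1) : ‖genericTphi p D t c x - t * x‖ ≤ ‖x‖ ^ p := by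
  rw [genericTphi, add_sub_cancel_left]
  refine IsUltrametricDist.norm_sum_le_of_forall_le_of_nonneg (by positivity) fun i hi => ?_
  obtain ⟨hi1, hiD⟩ := Finset.mem_Icc.1 hi
  rw [norm_mul, norm_pow]
  exact (mul_le_of_le_one_left (by positivity) (hc i hi1 hiD)).trans
    (pow_le_pow_of_le_one (norm_nonneg _) hx (Nat.le_self_pow (n := i) (by omega) p))

variable [Fact p.Prime] [CharP 𝕂 p] {ι : Type*} [Fintype ι]

theorem norm_genericTphiPi_sub_smul_le (hc : ∀ i, 1 ≤ i → i ≤ D → ‖c i‖ ≤ 1) {z : ι → 𝕂}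
    (hz : ‖z‖ ≤ 1) : ‖genericTphiPi p D t c ι z - t • z‖ ≤ ‖z‖ ^ p := by
  refine (pi_norm_le_iff_of_nonneg (by positivity)).2 fun i => ?_
  have hzi : ‖z i‖ ≤ ‖z‖ := norm_le_pi_norm z i
  simpa using (norm_genericTphi_sub_mul_le hc (hzi.trans hz)).trans
    (pow_le_pow_left₀ (norm_nonneg _) hzi p)

theorem aeval_genericTphiPi_apply_eq_zero_or_norm_eq (hc : ∀ i, 1 ≤ i → i ≤ D → ‖c i‖ ≤ 1)
    (ht : ∀ P : (ZMod p)[X], P ≠ 0 → ‖P.eval₂ (ZMod.castHom (dvd_refl p) 𝕂) t‖ = 1)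
    (b : ℤ[X]) {z : ι → 𝕂} (hz : ‖z‖ < 1) :
    aeval (genericTphiPi p D t c ι) b z = 0 ∨ ‖aeval (genericTphiPi p D t c ι) b z‖ = ‖z‖ := by
  by_cases hb : b.map (Int.castRingHom (ZMod p)) = 0
  · left
    rw [aeval_eq_zero_of_map_eq_zero (R := 𝕂) p _ hb, LinearMap.zero_apply]
  · right
    refine norm_aeval_apply_eq (by simpa using (ht X X_ne_zero).le) (Fact.out : p.Prime).one_lt
      (fun z hz => norm_genericTphiPi_sub_smul_le hc hz) ?_ hz
    rw [aeval_eq_eval₂_map_zmod p]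
    exact ht _ hb

theorem exists_pos_le_norm_of_generated (hc : ∀ i, 1 ≤ i → i ≤ D → ‖c i‖ ≤ 1)
    (ht : ∀ P : (ZMod p)[X], P ≠ 0 → ‖P.eval₂ (ZMod.castHom (dvd_refl p) 𝕂) t‖ = 1)
    {s : Set (ι → 𝕂)} (hs : s.Finite) {Γ : AddSubgroup (ι → 𝕂)}
    (hΓ : ∀ Γ' : AddSubgroup (ι → 𝕂),
      (∀ y ∈ Γ', genericTphiPi p D t c ι y ∈ Γ') → s ⊆ Γ' → Γ ≤ Γ') :
    ∃ ε > 0, ∀ γ ∈ Γ, γ ≠ 0 → ε ≤ ‖γ‖ := by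
  let T := genericTphiPi p D t c ι
  let : Module ℤ[X] (ι → 𝕂) := Module.compHom _ (aeval T).toRingHom
  let W := Submodule.span ℤ[X] s
  have : IsNoetherian ℤ[X] W := isNoetherian_of_fg_of_noetherian W (Submodule.fg_span hs)
  obtain ⟨ε, hε, hgap⟩ := exists_pos_le_norm_of_isNoetherian (A := ℤ[X]) (E := W) fun b z hz =>
    (aeval_genericTphiPi_apply_eq_zero_or_norm_eq hc ht b hz).imp (fun h => Subtype.ext h) id
  have hX : ∀ y, (X : ℤ[X]) • y = T y := fun y => LinearMap.congr_fun (aeval_X T) y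
  have hΓW : Γ ≤ W.toAddSubgroup :=
    hΓ _ (fun y hy => hX y ▸ W.smul_mem X hy) Submodule.subset_span
  exact ⟨ε, hε, fun γ hγ hγ0 => hgap ⟨γ, hΓW hγ⟩ (by simpa using hγ0)⟩

end Norm

theorem Metric.isClosed_and_discreteTopology_of_pairwise_le_dist {X : Type*} [MetricSpace X]
    {s : Set X} {ε : ℝ} (hε : 0 < ε) (hs : s.Pairwise fun x y => ε ≤ dist x y) :
    IsClosed s ∧ DiscreteTopology s ∧ closure s = s :=
  have hclosed := isClosed_of_pairwise_le_dist hε hs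
  ⟨hclosed, DiscreteTopology.of_forall_le_dist hε fun x y hxy =>
    hs x.2 y.2 (Subtype.coe_ne_coe.2 hxy), hclosed.closure_eq⟩

theorem stmt2_general {K : Type*} [Field K] (p : ℕ) [Fact p.Prime] [CharP K p]
    (t : K) (D : ℕ) (c : ℕ → K)
    (v : AbsoluteValue K ℝ) (hna : IsNonarchimedean (v : K → ℝ))
    (hunit : ∀ P : Polynomial (ZMod p), P ≠ 0 →
      v (Polynomial.eval₂ (ZMod.castHom (dvd_refl p) K) t P) = 1)
    (hint : ∀ i, 1 ≤ i → i ≤ D → v (c i) ≤ 1)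
    (g : ℕ)
    (r : ℕ) (xs : Fin r → (Fin g → K))
    (Γ : AddSubgroup (Fin g → K))
    -- `Γ` is the smallest such submodule, i.e. it is generated by the points `xs j`:
    (hmin : ∀ Γ' : AddSubgroup (Fin g → K),
      (∀ y ∈ Γ', (fun i => genericTphi p D t c (y i)) ∈ Γ') → (∀ j, xs j ∈ Γ') → Γ ≤ Γ') :
    letI S : Set (Fin g → v.Completion) :=
      {y | ∃ γ ∈ Γ, y = fun i => embCompletion v (γ i)}
    IsClosed S ∧ DiscreteTopology ↥S ∧ closure S = S := by
  have : IsUltrametricDist (WithAbs v) :=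
    IsUltrametricDist.isUltrametricDist_of_isNonarchimedean_norm fun x y => hna x.ofAbs y.ofAbs
  let φ : K →+* WithAbs v := (WithAbs.equiv v).symm
  have : CharP (WithAbs v) p := charP_of_injective_ringHom φ.injective p
  let e : (Fin g → K) →+ (Fin g → WithAbs v) := φ.toAddMonoidHom.compLeft (Fin g)
  have ht : ∀ P : (ZMod p)[X], P ≠ 0 →
      ‖P.eval₂ (ZMod.castHom (dvd_refl p) (WithAbs v)) (φ t)‖ = 1 := by
    intro P hP
    rw [← hunit P hP, Subsingleton.elim (ZMod.castHom _ _) (φ.comp (ZMod.castHom (dvd_refl p) K)),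
      ← hom_eval₂]
    rfl
  have he : ∀ y, e (fun i => genericTphi p D t c (y i)) = genericTphiPi p D (φ t) (φ ∘ c) _ (e y) :=
    fun y => funext fun i => map_genericTphi p D t c φ (y i)
  obtain ⟨ε, hε, hgap⟩ := exists_pos_le_norm_of_generated (ι := Fin g) (c := φ ∘ c) hint ht
    (Set.finite_range (e ∘ xs)) (Γ := Γ.map e) fun Γ' hΓ' hxs =>
      AddSubgroup.map_le_iff_le_comap.2 <| hmin _
        (fun y hy => by rw [AddSubgroup.mem_comap, he]; exact hΓ' _ hy) fun j => hxs ⟨j, rfl⟩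
  refine Metric.isClosed_and_discreteTopology_of_pairwise_le_dist hε ?_
  rintro _ ⟨γ₁, h₁, rfl⟩ _ ⟨γ₂, h₂, rfl⟩ hne
  have hγ : e (γ₁ - γ₂) ≠ 0 := fun h =>
    hne (by rw [sub_eq_zero.1 (funext fun i => (map_eq_zero φ).1 (congr_fun h i))])
  calc ε ≤ ‖e (γ₁ - γ₂)‖ := hgap _ (AddSubgroup.mem_map_of_mem _ (Γ.sub_mem h₁ h₂)) hγ
    _ = dist (e γ₁) (e γ₂) := by rw [map_sub, dist_eq_norm]
    _ = _ := ((Isometry.piMap (fun _ => ((↑) : WithAbs v → v.Completion))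
          fun _ => UniformSpace.Completion.coe_isometry).dist_eq _ _).symm

/-- For a Drinfeld module of generic characteristic over `K` of
characteristic `p` and a nonarchimedean absolute value `v` on `K` at which every nonzero
element of `𝔽_p[t]` is a unit and the coefficients of `φ` are integral, the image in
`K_v^g` of a finitely generated `Φ(R)`-submodule `Γ ⊆ K^g` generated by `v`-integral points
is a discrete closed subgroup; in particular its topological closure in `K_v^g` is itself. -/
theorem stmt2 {K : Type*} [Field K] (p : ℕ) [Fact p.Prime] [CharP K p]
    (t : K) (D : ℕ) (hD : 1 ≤ D) (c : ℕ → K) (hcD : c D ≠ 0)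
    (v : AbsoluteValue K ℝ) (hna : IsNonarchimedean (v : K → ℝ))
    (hunit : ∀ P : Polynomial (ZMod p), P ≠ 0 →
      v (Polynomial.eval₂ (ZMod.castHom (dvd_refl p) K) t P) = 1)
    (hint : ∀ i, 1 ≤ i → i ≤ D → v (c i) ≤ 1)
    (g : ℕ) (hg : 1 ≤ g)
    (r : ℕ) (xs : Fin r → (Fin g → K)) (hxs : ∀ j i, v (xs j i) ≤ 1)
    (Γ : AddSubgroup (Fin g → K))
    -- `Γ` is a `Φ(R)`-submodule (under the coordinatewise action):
    (hΓmod : ∀ y ∈ Γ, (fun i => genericTphi p D t c (y i)) ∈ Γ)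
    -- `Γ` contains the generators:
    (hgen : ∀ j, xs j ∈ Γ)
    -- `Γ` is the smallest such submodule, i.e. it is generated by the points `xs j`:
    (hmin : ∀ Γ' : AddSubgroup (Fin g → K),
      (∀ y ∈ Γ', (fun i => genericTphi p D t c (y i)) ∈ Γ') → (∀ j, xs j ∈ Γ') → Γ ≤ Γ') :
    letI S : Set (Fin g → v.Completion) :=
      {y | ∃ γ ∈ Γ, y = fun i => embCompletion v (γ i)}
    IsClosed S ∧ DiscreteTopology ↥S ∧ closure S = S :=
  stmt2_general p t D c v hna hunit hint g r xs Γ hmin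
end

section
/- Let p be a prime and L a field of characteristic p that is complete with respect to a nonarchimedean absolute value |·|. Let φ(X) = Σ_{i=d}^{D} c_i X^{p^i} ∈ L[X] with 1 ≤ d ≤ D and |c_i| ≤ 1 for all i. Let a ∈ 𝔽_p[t] be a polynomial with nonzero constant term (i.e. t does not divide a). Then Φ_a(O_L) is an open subgroup of the additive group of L, where O_L := {x ∈ L : |x| ≤ 1}. -/
/-- The `𝔽_p`-linear map `T_φ : L → L` induced by the additive polynomial
`φ(X) = Σ_{i=d}^{D} c_i X^{p^i}`. -/
noncomputable def specialTphi {L : Type*} [Field L] (p d D : ℕ) (c : ℕ → L) : L → L :=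
  fun x => ∑ i ∈ Finset.Icc d D, c i * x ^ (p ^ i)

/-- For `a ∈ R = 𝔽_p[t]`, written `a = Σ_j a_j t^j`, the induced map
`Φ_a : L → L`, `Φ_a(x) = Σ_j a_j T_φ^{∘j}(x)`. -/
noncomputable def phiAct {L : Type*} [Field L] {p : ℕ} [CharP L p]
    (Tφ : L → L) (a : Polynomial (ZMod p)) (x : L) : L :=
  ∑ j ∈ Finset.range (a.natDegree + 1),
    (ZMod.castHom (dvd_refl p) L (a.coeff j)) * (Tφ^[j] x)

/-!
Write `Φ_a(x) = a₀ x + F(x)`. Since every exponent `p^i` with `i ≥ d ≥ 1` is at least `p` and all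
coefficients have absolute value at most `1`, the perturbation satisfies `|F(x)| ≤ |x|^p` on `O_L`,
while `|a₀| = 1` because `a₀ ∈ 𝔽_p^×` is a root of unity. On the ball of radius `1/2` the map
`x ↦ x + a₀⁻¹ (y - Φ_a(x))` is therefore a contraction, so by completeness `Φ_a` maps that ball onto
itself. As `Φ_a` is additive, `Φ_a(O_L)` is a subgroup containing a neighbourhood of `0`,
hence open.
-/

open Finset Function Metric Set

theorem closedBall_subset_image_of_norm_sub_mul_le {K : Type*} [NormedField K]
    [IsUltrametricDist K] [CompleteSpace K] (Φ : K →+ K) {u : K} (hu : ‖u‖ = 1)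
    {r : ℝ} {k : NNReal} (hk : k < 1)
    (hΦ : ∀ x ∈ closedBall (0 : K) r, ‖Φ x - u * x‖ ≤ k * ‖x‖) :
    closedBall 0 r ⊆ Φ '' closedBall 0 r := by
  intro y hy
  rw [mem_closedBall_zero_iff] at hy
  have hu0 : u ≠ 0 := norm_ne_zero_iff.1 (hu.symm ▸ one_ne_zero)
  set s := closedBall (0 : K) r
  have hΦs : ∀ x ∈ s, ‖Φ x - u * x‖ ≤ r := fun x hx =>
    (hΦ x hx).trans <| (mul_le_of_le_one_left (norm_nonneg x) hk.le).trans
      (mem_closedBall_zero_iff.1 hx)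
  -- Newton iteration with the constant derivative `u`; its fixed points solve `Φ x = y`.
  let G : K → K := fun x => x + u⁻¹ * (y - Φ x)
  have hG : ∀ x, G x = -u⁻¹ * ((Φ x - u * x) + -y) := fun x => by
    simp only [G]; field_simp; ring
  have hGs : MapsTo G s s := fun x hx => by
    rw [mem_closedBall_zero_iff, hG, norm_mul, norm_neg, norm_inv, hu, inv_one, one_mul]
    exact (IsUltrametricDist.norm_add_le_max _ _).trans (max_le (hΦs x hx) (by rwa [norm_neg]))
  have hGc : ContractingWith k (hGs.restrict G s s) := by
    refine ⟨hk, LipschitzWith.of_dist_le_mul fun x x' => ?_⟩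
    simp only [Subtype.dist_eq, MapsTo.val_restrict_apply, dist_eq_norm]
    have hxx' : (x : K) - x' ∈ s := by
      rw [mem_closedBall_zero_iff, sub_eq_add_neg]
      exact (IsUltrametricDist.norm_add_le_max _ _).trans
        (max_le (mem_closedBall_zero_iff.1 x.2) (by simpa using mem_closedBall_zero_iff.1 x'.2))
    have hGsub : G x - G x' = -u⁻¹ * (Φ (x - x') - u * (x - x')) := by
      rw [hG, hG, map_sub]; ring
    rw [hGsub, norm_mul, norm_neg, norm_inv, hu, inv_one, one_mul]
    exact hΦ _ hxx'
  obtain ⟨x, hx, hfix, -⟩ := hGc.exists_fixedPoint' isClosed_closedBall.isComplete hGs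
    (mem_closedBall_self ((norm_nonneg y).trans hy)) (edist_ne_top _ _)
  refine ⟨x, hx, ?_⟩
  have hstep : u⁻¹ * (y - Φ x) = 0 := add_eq_left.1 hfix
  exact (sub_eq_zero.1 ((mul_eq_zero.1 hstep).resolve_left (inv_ne_zero hu0))).symm

namespace AbsoluteValue

variable {L : Type*} [Field L] {v : AbsoluteValue L ℝ}

theorem apply_specialTphi_le_pow (hna : IsNonarchimedean (v : L → ℝ)) {p d D : ℕ} (hd : 1 ≤ d)
    {c : ℕ → L} (hc : ∀ i, d ≤ i → i ≤ D → v (c i) ≤ 1) {x : L} (hx : v x ≤ 1) :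
    v (specialTphi p d D c x) ≤ v x ^ p := by
  refine hna.apply_sum_le.trans (Real.iSup_le (fun i => ?_) (by positivity))
  have hi := Finset.mem_Icc.1 i.2
  rw [map_mul, map_pow]
  exact (mul_le_of_le_one_left (by positivity) (hc i hi.1 hi.2)).trans
    (pow_le_pow_of_le_one (v.nonneg x) hx (Nat.le_self_pow (by omega) p))

theorem apply_iterate_succ_le_pow {T : L → L} {n : ℕ} (hn : n ≠ 0)
    (hT : ∀ x, v x ≤ 1 → v (T x) ≤ v x ^ n) {x : L} (hx : v x ≤ 1) (j : ℕ) :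
    v (T^[j + 1] x) ≤ v x ^ n := by
  induction j with
  | zero => simpa using hT x hx
  | succ j ih =>
    have h1 : v (T^[j + 1] x) ≤ 1 := ih.trans (pow_le_one₀ (v.nonneg x) hx)
    rw [iterate_succ_apply']
    exact ((hT _ h1).trans (pow_le_of_le_one (v.nonneg _) h1 hn)).trans ih

variable (v) {p : ℕ} [Fact p.Prime] [CharP L p]

theorem apply_castHom_zmod_eq_one {z : ZMod p} (hz : z ≠ 0) :
    v (ZMod.castHom (dvd_refl p) L z) = 1 := by
  have hp := (Fact.out : p.Prime).two_le
  have h : v (ZMod.castHom (dvd_refl p) L z) ^ (p - 1) = 1 := by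
    rw [← map_pow, ← map_pow, ZMod.pow_card_sub_one_eq_one hz, map_one, map_one]
  exact (pow_eq_one_iff_of_nonneg (v.nonneg _) (by omega)).1 h

theorem apply_castHom_zmod_le_one (z : ZMod p) : v (ZMod.castHom (dvd_refl p) L z) ≤ 1 := by
  rcases eq_or_ne z 0 with rfl | hz
  · simp
  · exact (v.apply_castHom_zmod_eq_one hz).le

variable {v}

theorem apply_phiAct_sub_le_pow (hna : IsNonarchimedean (v : L → ℝ)) {T : L → L} {n : ℕ}
    (hn : n ≠ 0) (hT : ∀ x, v x ≤ 1 → v (T x) ≤ v x ^ n) (a : Polynomial (ZMod p))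
    {x : L} (hx : v x ≤ 1) :
    v (phiAct T a x - ZMod.castHom (dvd_refl p) L (a.coeff 0) * x) ≤ v x ^ n := by
  rw [phiAct, sum_range_succ', iterate_zero_apply, add_sub_cancel_right]
  refine hna.apply_sum_le.trans (Real.iSup_le (fun j => ?_) (by positivity))
  rw [map_mul]
  exact (mul_le_of_le_one_left (v.nonneg _) (v.apply_castHom_zmod_le_one _)).trans
    (apply_iterate_succ_le_pow hn hT hx j)

theorem apply_phiAct_specialTphi_sub_le_half_mul (hna : IsNonarchimedean (v : L → ℝ)) {d D : ℕ}
    (hd : 1 ≤ d) {c : ℕ → L} (hc : ∀ i, d ≤ i → i ≤ D → v (c i) ≤ 1) (a : Polynomial (ZMod p))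
    {x : L} (hx : v x ≤ 1 / 2) :
    v (phiAct (specialTphi p d D c) a x - ZMod.castHom (dvd_refl p) L (a.coeff 0) * x) ≤
      1 / 2 * v x := by
  have hp := (Fact.out : p.Prime).two_le
  have hx1 : v x ≤ 1 := by linarith
  calc _ ≤ v x ^ p := apply_phiAct_sub_le_pow hna (by omega)
          (fun _ => apply_specialTphi_le_pow hna hd hc) a hx1
    _ ≤ v x ^ 2 := pow_le_pow_of_le_one (v.nonneg _) hx1 hp
    _ ≤ 1 / 2 * v x := by rw [sq]; gcongr

end AbsoluteValue

section Additive

variable {L : Type*} [Field L] {p : ℕ} [Fact p.Prime] [CharP L p]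

theorem specialTphi_add (d D : ℕ) (c : ℕ → L) (x y : L) :
    specialTphi p d D c (x + y) = specialTphi p d D c x + specialTphi p d D c y := by
  simp only [specialTphi, add_pow_char_pow, mul_add, sum_add_distrib]

variable (p) in
noncomputable def specialTphiHom (d D : ℕ) (c : ℕ → L) : L →+ L :=
  AddMonoidHom.mk' (specialTphi p d D c) (specialTphi_add d D c)

noncomputable def phiActHom (T : L →+ L) (a : Polynomial (ZMod p)) : L →+ L :=
  AddMonoidHom.mk' (phiAct T a) fun x y => by
    simp only [phiAct, iterate_map_add, mul_add, sum_add_distrib]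

end Additive

theorem WithAbs.isUltrametricDist {L : Type*} [Field L] {v : AbsoluteValue L ℝ}
    (hna : IsNonarchimedean (v : L → ℝ)) : IsUltrametricDist (WithAbs v) :=
  IsUltrametricDist.isUltrametricDist_of_isNonarchimedean_norm fun x y => hna x.ofAbs y.ofAbs

noncomputable def AddMonoidHom.withAbs {L : Type*} [Field L] (v : AbsoluteValue L ℝ)
    (f : L →+ L) : WithAbs v →+ WithAbs v :=
  (WithAbs.equiv v).symm.toAddEquiv.toAddMonoidHom.comp
    (f.comp (WithAbs.equiv v).toAddEquiv.toAddMonoidHom)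

theorem stmt7_general {L : Type*} [Field L] (p : ℕ) [Fact p.Prime] [CharP L p]
    (v : AbsoluteValue L ℝ) (hna : IsNonarchimedean (v : L → ℝ))
    [CompleteSpace (WithAbs v)]
    (d D : ℕ) (hd : 1 ≤ d) (c : ℕ → L)
    (hint : ∀ i, d ≤ i → i ≤ D → v (c i) ≤ 1)
    (a : Polynomial (ZMod p)) (ha : a.coeff 0 ≠ 0) :
    ∃ H : AddSubgroup (WithAbs v),
      (H : Set (WithAbs v)) =
        {y : WithAbs v | ∃ x : L, v x ≤ 1 ∧
          (WithAbs.equiv v).symm (phiAct (specialTphi p d D c) a x) = y} ∧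
      IsOpen (H : Set (WithAbs v)) := by
  have := WithAbs.isUltrametricDist hna
  set Φ := (phiActHom (specialTphiHom p d D c) a).withAbs v
  set O := (IsUltrametricDist.closedBall_openAddSubgroup (WithAbs v) one_pos).toAddSubgroup
  refine ⟨O.map Φ, ?_, ?_⟩
  · ext y
    rw [AddSubgroup.coe_map]
    constructor
    · rintro ⟨x, hx, rfl⟩
      exact ⟨x.ofAbs, mem_closedBall_zero_iff.1 hx, rfl⟩
    · rintro ⟨x, hx, rfl⟩
      exact ⟨WithAbs.toAbs v x, mem_closedBall_zero_iff.2 hx, rfl⟩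
  · refine AddSubgroup.isOpen_of_mem_nhds _ (g := 0) <| Filter.mem_of_superset
      (closedBall_mem_nhds 0 one_half_pos) <| ?_
    refine (closedBall_subset_image_of_norm_sub_mul_le Φ (k := 1 / 2)
      (u := WithAbs.toAbs v (ZMod.castHom (dvd_refl p) L (a.coeff 0)))
      (v.apply_castHom_zmod_eq_one ha) (by norm_num) fun x hx => ?_).trans
      (image_mono (closedBall_subset_closedBall one_half_lt_one.le))
    exact v.apply_phiAct_specialTphi_sub_le_half_mul hna hd hint a (mem_closedBall_zero_iff.1 hx)

/-- Let `L` be a field of characteristic `p`, complete with respect to a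
nonarchimedean absolute value `|·|`, let `φ(X) = Σ_{i=d}^{D} c_i X^{p^i}` with `1 ≤ d ≤ D`
and `|c_i| ≤ 1` for all `i`, and let `a ∈ 𝔽_p[t]` have nonzero constant term.  Then
`Φ_a(O_L)` is an open subgroup of the additive group of `L`, where
`O_L = {x ∈ L : |x| ≤ 1}`. -/
theorem stmt7 {L : Type*} [Field L] (p : ℕ) [Fact p.Prime] [CharP L p]
    (v : AbsoluteValue L ℝ) (hna : IsNonarchimedean (v : L → ℝ))
    [CompleteSpace (WithAbs v)]
    (d D : ℕ) (hd : 1 ≤ d) (hdD : d ≤ D) (c : ℕ → L)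
    (hint : ∀ i, d ≤ i → i ≤ D → v (c i) ≤ 1)
    (a : Polynomial (ZMod p)) (ha : a.coeff 0 ≠ 0) :
    ∃ H : AddSubgroup (WithAbs v),
      (H : Set (WithAbs v)) =
        {y : WithAbs v | ∃ x : L, v x ≤ 1 ∧
          (WithAbs.equiv v).symm (phiAct (specialTphi p d D c) a x) = y} ∧
      IsOpen (H : Set (WithAbs v)) :=
  stmt7_general p v hna d D hd c hint a ha
end

section
/- Let p be a prime, K a field of characteristic p with a fixed algebraic closure K̄, and φ(X) = Σ_{i=d}^{D} c_i X^{p^i} ∈ K[X] a Drinfeld module of special characteristic (1 ≤ d ≤ D, c_d ≠ 0, c_D ≠ 0; in particular φ is inseparable). If Φ[t^∞](K^sep) is finite, then for every intermediate field K ⊆ L ⊆ K̄ with [L : K] finite, the set Φ[t^∞](L^sep) is also finite, where L^sep denotes the separable closure of L in K̄. -/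
/-!
Since `d ≥ 1`, `T_φ x = Σ cᵢ (x ^ p) ^ p ^ (i - 1)` is a polynomial in `x ^ p` with coefficients
in `K`, so `x ^ p ^ m ∈ K^sep` implies `T_φ^[m] x ∈ K^sep`. As `L / K` is finite, a single `m`
works for all `x ∈ L^sep`: every `a ∈ L` has `a ^ p ^ m` separable over `K` for a uniform `m`,
and `L^sep` lies in the field generated by `L` and `K^sep`, over which `K̄` is purely
inseparable. So `T_φ^[m]` maps `Φ[t^∞](L^sep)` into `Φ[t^∞](K^sep)`, and it has finite fibres
because `T_φ` is a nonzero polynomial map.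
-/

theorem Set.Finite.preimage_iterate {α : Type*} {f : α → α} (hf : ∀ y, (f ⁻¹' {y}).Finite)
    {s : Set α} (hs : s.Finite) (n : ℕ) : (f^[n] ⁻¹' s).Finite := by
  induction n with
  | zero => simpa
  | succ n ih =>
    rw [Function.iterate_succ, Set.preimage_comp]
    exact ih.preimage' fun y _ => hf y

section specialTphi

open Polynomial

variable {E : Type*} [Field E] {p d D : ℕ} {c : ℕ → E}

theorem specialTphi_zero (hp : p ≠ 0) : specialTphi p d D c 0 = 0 :=
  Finset.sum_eq_zero fun i _ => by simp [hp]

theorem specialTphi_eq_eval (x : E) :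
    specialTphi p d D c x = (∑ i ∈ Finset.Icc d D, C (c i) * X ^ p ^ i).eval x := by
  simp [specialTphi, eval_finsetSum]

theorem finite_specialTphi_preimage (hp : 1 < p) (hdD : d ≤ D) (hcD : c D ≠ 0) (y : E) :
    (specialTphi p d D c ⁻¹' {y}).Finite := by
  set P := ∑ i ∈ Finset.Icc d D, C (c i) * X ^ p ^ i - C y
  have hcoeff : P.coeff (p ^ D) = c D := by
    simp [P, finsetSum_coeff, Nat.pow_right_inj hp, hdD, coeff_C, (zero_lt_one.trans hp).ne']
  have hP : P ≠ 0 := fun h => hcD (by rw [← hcoeff, h, coeff_zero])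
  refine (finite_setOfPred_isRoot hP).subset fun x hx => ?_
  simpa [P, specialTphi_eq_eval, sub_eq_zero] using hx

theorem specialTphi_pow_mem [ExpChar E p] (hd : 1 ≤ d) {S : Subring E} (hc : ∀ i, c i ∈ S)
    {x : E} {k : ℕ} (hx : x ^ p ^ (k + 1) ∈ S) : specialTphi p d D c x ^ p ^ k ∈ S := by
  rw [specialTphi, ← iterateFrobenius_def, map_sum]
  refine sum_mem fun i hi => ?_
  obtain ⟨j, rfl⟩ : ∃ j, i = j + 1 := ⟨i - 1, by grind⟩
  rw [iterateFrobenius_def, mul_pow, ← pow_mul, show p ^ (j + 1) * p ^ k = p ^ (k + 1) * p ^ j by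
    ring, pow_mul]
  exact mul_mem (pow_mem (hc _) _) (pow_mem hx _)

theorem iterate_specialTphi_mem [ExpChar E p] (hd : 1 ≤ d) {S : Subring E} (hc : ∀ i, c i ∈ S)
    {k : ℕ} {x : E} (hx : x ^ p ^ k ∈ S) : (specialTphi p d D c)^[k] x ∈ S := by
  induction k generalizing x with
  | zero => simpa using hx
  | succ k ih => exact ih (specialTphi_pow_mem hd hc hx)

end specialTphi

section separableClosure

open IntermediateField

variable {K E : Type*} [Field K] [Field E] [Algebra K E] (p : ℕ) [ExpChar K p]

theorem IntermediateField.exists_pow_mem_separableClosure_of_finiteDimensional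
    (L : IntermediateField K E) [FiniteDimensional K L] :
    ∃ m, ∀ a : L, (a : E) ^ p ^ m ∈ separableClosure K E := by
  refine ⟨IsPurelyInseparable.exponent (separableClosure K L) L, fun a => ?_⟩
  obtain ⟨y, hy⟩ := IsPurelyInseparable.exponent_def' (separableClosure K L) p a
  have hsep : IsSeparable K ((y : L) : E) :=
    (mem_separableClosure_iff.1 y.2).map L.val L.val.injective
  rw [mem_separableClosure_iff, ← IntermediateField.coe_pow, ← hy]
  exact hsep

theorem IntermediateField.exists_pow_mem_separableClosure [Algebra.IsAlgebraic K E]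
    (L : IntermediateField K E) [FiniteDimensional K L] :
    ∃ m, ∀ x ∈ separableClosure L E, x ^ p ^ m ∈ separableClosure K E := by
  obtain ⟨m, hm⟩ := L.exists_pow_mem_separableClosure_of_finiteDimensional p
  have : ExpChar E p := expChar_of_injective_algebraMap (algebraMap K E).injective p
  set Ks := separableClosure K E
  let M := adjoin L (Ks : Set E)
  have : IsPurelyInseparable M E := (isPurelyInseparable_iff_pow_mem M p).2 fun x => by
    obtain ⟨n, y, hy⟩ := IsPurelyInseparable.pow_mem Ks p x
    exact ⟨n, ⟨y, subset_adjoin _ _ y.2⟩, hy⟩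
  have hM : M.toSubfield ≤ Ks.toSubfield.comap (iterateFrobenius E p m) := by
    rw [adjoin_toSubfield, Subfield.closure_le]
    rintro _ (⟨a, rfl⟩ | hx)
    · exact hm a
    · exact pow_mem hx _
  exact ⟨m, fun x hx => hM (separableClosure_le L E M hx)⟩

end separableClosure

theorem stmt9_general {K : Type*} [Field K] (p : ℕ) [Fact p.Prime] [CharP K p]
    (d D : ℕ) (hd : 1 ≤ d) (hdD : d ≤ D) (c : ℕ → K)
    (hcD : c D ≠ 0)
    -- `Φ[t^∞](K^sep)` is finite:
    (htor : {x : AlgebraicClosure K | x ∈ separableClosure K (AlgebraicClosure K) ∧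
      ∃ n : ℕ, (specialTphi p d D (fun i => algebraMap K (AlgebraicClosure K) (c i)))^[n] x
        = 0}.Finite)
    (L : IntermediateField K (AlgebraicClosure K)) [FiniteDimensional K ↥L] :
    {x : AlgebraicClosure K | x ∈ separableClosure ↥L (AlgebraicClosure K) ∧
      ∃ n : ℕ, (specialTphi p d D (fun i => algebraMap K (AlgebraicClosure K) (c i)))^[n] x
        = 0}.Finite := by
  set T := specialTphi p d D (fun i => algebraMap K (AlgebraicClosure K) (c i))
  have : ExpChar (AlgebraicClosure K) p :=
    expChar_of_injective_algebraMap (algebraMap K (AlgebraicClosure K)).injective p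
  have hp : 1 < p := (Fact.out : p.Prime).one_lt
  obtain ⟨m, hm⟩ := L.exists_pow_mem_separableClosure p
  have hfib : ∀ y, (T ⁻¹' {y}).Finite :=
    finite_specialTphi_preimage hp hdD ((map_ne_zero _).2 hcD)
  refine (htor.preimage_iterate hfib m).subset ?_
  rintro x ⟨hx, n, hn⟩
  refine ⟨iterate_specialTphi_mem (S := (separableClosure K _).toSubfield.toSubring) hd
    (fun i => IntermediateField.algebraMap_mem _ _) (hm x hx), n, ?_⟩
  rw [← Function.Commute.iterate_iterate_self, hn]
  exact Function.iterate_fixed (specialTphi_zero hp.ne_bot) m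

/-- Let `φ` be a Drinfeld module of special characteristic over a field `K`
of characteristic `p`, with a fixed algebraic closure `K̄`.  If `Φ[t^∞](K^sep)` is finite,
then for every intermediate field `K ⊆ L ⊆ K̄` with `[L : K]` finite, the set
`Φ[t^∞](L^sep)` is also finite, where `L^sep` is the separable closure of `L` in `K̄`. -/
theorem stmt9 {K : Type*} [Field K] (p : ℕ) [Fact p.Prime] [CharP K p]
    (d D : ℕ) (hd : 1 ≤ d) (hdD : d ≤ D) (c : ℕ → K)
    (hcd : c d ≠ 0) (hcD : c D ≠ 0)
    -- `Φ[t^∞](K^sep)` is finite: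
    (htor : {x : AlgebraicClosure K | x ∈ separableClosure K (AlgebraicClosure K) ∧
      ∃ n : ℕ, (specialTphi p d D (fun i => algebraMap K (AlgebraicClosure K) (c i)))^[n] x
        = 0}.Finite)
    (L : IntermediateField K (AlgebraicClosure K)) [FiniteDimensional K ↥L] :
    {x : AlgebraicClosure K | x ∈ separableClosure ↥L (AlgebraicClosure K) ∧
      ∃ n : ℕ, (specialTphi p d D (fun i => algebraMap K (AlgebraicClosure K) (c i)))^[n] x
        = 0}.Finite :=
  stmt9_general p d D hd hdD c hcD htor L
end
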